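/- arXiv:2307.13135 — 2 statements merged into one kernel-verified Lean document; each statement's English description precedes it below -/
import Mathlib

section
/- Let L : ℝ^m → ℝ be differentiable with M-Lipschitz gradient and Θ ⊆ ℝ^m closed convex. Fix θ ∈ Θ, τ > 0, and g, G ∈ ℝ^m with g = ∇L(θ). Define θ⁺ := Π(θ − τG), θ̄ := Π(θ − τg), e := θ⁺ − θ, ē := θ̄ − θ. Then L(θ⁺) − L(θ) ≤ τ|g − G|² − (1/(2τ) − M)|ē|² − (1/(2τ) − M/2)|e|² − |e − ē|²/(2τ). -/
/-!
The descent lemma bounds `L θ⁺ - L θ` by `⟪g, e⟫ + M/2 ‖e‖²`. The variational inequality of the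
projection defining `θ̄`, tested against `θ`, bounds `⟪g, ē⟫`; the one defining `θ⁺`, tested
against `θ̄`, bounds `⟪G, e - ē⟫`. What remains of `⟪g, e⟫ = ⟪g, ē⟫ + ⟪G, e - ē⟫ + ⟪g - G, e - ē⟫`
is controlled by Cauchy–Schwarz and nonexpansiveness, `‖e - ē‖ ≤ τ ‖g - G‖`. The bound obtained
this way has coefficient `1 / (2τ)` in front of `‖ē‖²`; the weaker `1 / (2τ) - M` is then free.
-/

open RealInnerProductSpace Set

section Descent

variable {E : Type*} [NormedAddCommGroup E] [InnerProductSpace ℝ E] [CompleteSpace E]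

theorem le_add_inner_gradient_add_of_lipschitz_gradient {L : E → ℝ} (hL : Differentiable ℝ L)
    {M : ℝ} (hLip : ∀ x y, ‖gradient L x - gradient L y‖ ≤ M * ‖x - y‖) (x y : E) :
    L y ≤ L x + ⟪gradient L x, y - x⟫ + M / 2 * ‖y - x‖ ^ 2 := by
  set v := y - x
  have hpath (t : ℝ) : HasDerivAt (fun t : ℝ => x + t • v) v t := by
    simpa using ((hasDerivAt_id t).smul_const v).const_add x
  have hLpath (t : ℝ) : HasDerivAt (fun t => L (x + t • v)) ⟪gradient L (x + t • v), v⟫ t := by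
    simpa [InnerProductSpace.toDual_apply_apply, Function.comp_def] using
      (hL (x + t • v)).hasGradientAt.hasFDerivAt.comp_hasDerivAt t (hpath t)
  have hφ (t : ℝ) : HasDerivAt (fun t => L (x + t • v) - t * ⟪gradient L x, v⟫)
      (⟪gradient L (x + t • v), v⟫ - ⟪gradient L x, v⟫) t :=
    (hLpath t).sub (hasDerivAt_mul_const _)
  have hB (t : ℝ) : HasDerivAt (fun t => L x + M / 2 * ‖v‖ ^ 2 * t ^ 2) (M * ‖v‖ ^ 2 * t) t := by
    refine (((hasDerivAt_pow 2 t).const_mul (M / 2 * ‖v‖ ^ 2)).const_add (L x)).congr_deriv ?_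
    norm_num
    ring
  have hslope (t : ℝ) (ht : 0 ≤ t) :
      ⟪gradient L (x + t • v), v⟫ - ⟪gradient L x, v⟫ ≤ M * ‖v‖ ^ 2 * t :=
    calc ⟪gradient L (x + t • v), v⟫ - ⟪gradient L x, v⟫
        = ⟪gradient L (x + t • v) - gradient L x, v⟫ := (inner_sub_left _ _ _).symm
      _ ≤ ‖gradient L (x + t • v) - gradient L x‖ * ‖v‖ := real_inner_le_norm _ _
      _ ≤ M * ‖t • v‖ * ‖v‖ := by
          gcongr
          simpa using hLip (x + t • v) x
      _ = M * ‖v‖ ^ 2 * t := by rw [norm_smul, Real.norm_of_nonneg ht]; ring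
  have := image_le_of_deriv_right_le_deriv_boundary
    (fun t _ => (hφ t).continuousAt.continuousWithinAt) (fun t _ => (hφ t).hasDerivWithinAt)
    (by simp) (fun t _ => (hB t).continuousAt.continuousWithinAt)
    (fun t _ => (hB t).hasDerivWithinAt) (fun t ht => hslope t ht.1) (right_mem_Icc.2 zero_le_one)
  simp only [one_smul, one_mul, one_pow, mul_one, v, add_sub_cancel] at this
  linarith

end Descent

section NearestPoint

variable {E : Type*} [NormedAddCommGroup E] [InnerProductSpace ℝ E] {K : Set E} {P : E → E}

theorem real_inner_sub_nearest_le_zero (hK : Convex ℝ K) (hPmem : ∀ x, P x ∈ K)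
    (hPproj : ∀ x, ∀ y ∈ K, ‖x - P x‖ ≤ ‖x - y‖) (x : E) {y : E} (hy : y ∈ K) :
    ⟪x - P x, y - P x⟫ ≤ 0 := by
  have : Nonempty K := ⟨⟨P x, hPmem x⟩⟩
  have hbdd : BddBelow (range fun w : K => ‖x - w‖) := ⟨0, by rintro _ ⟨w, rfl⟩; positivity⟩
  have hinf : ‖x - P x‖ = ⨅ w : K, ‖x - w‖ :=
    le_antisymm (le_ciInf fun w => hPproj x w w.2) (ciInf_le hbdd ⟨P x, hPmem x⟩)
  exact (norm_eq_iInf_iff_real_inner_le_zero hK (hPmem x)).1 hinf y hy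

theorem norm_nearest_sub_nearest_le (hK : Convex ℝ K) (hPmem : ∀ x, P x ∈ K)
    (hPproj : ∀ x, ∀ y ∈ K, ‖x - P x‖ ≤ ‖x - y‖) (x y : E) :
    ‖P x - P y‖ ≤ ‖x - y‖ := by
  have hx := real_inner_sub_nearest_le_zero hK hPmem hPproj x (hPmem y)
  have hy := real_inner_sub_nearest_le_zero hK hPmem hPproj y (hPmem x)
  have hsq : ‖P x - P y‖ ^ 2 ≤ ‖x - y‖ * ‖P x - P y‖ :=
    calc ‖P x - P y‖ ^ 2 ≤ ⟪x - y, P x - P y⟫ := by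
          rw [← real_inner_self_eq_norm_sq]
          simp only [inner_sub_left, inner_sub_right, real_inner_comm] at hx hy ⊢
          linarith
      _ ≤ ‖x - y‖ * ‖P x - P y‖ := real_inner_le_norm _ _
  nlinarith [norm_nonneg (P x - P y), norm_nonneg (x - y)]

theorem real_inner_smul_add_step_le_zero (hK : Convex ℝ K) (hPmem : ∀ x, P x ∈ K)
    (hPproj : ∀ x, ∀ y ∈ K, ‖x - P x‖ ≤ ‖x - y‖) (θ d : E) (τ : ℝ) {y : E} (hy : y ∈ K) :
    ⟪τ • d + (P (θ - τ • d) - θ), P (θ - τ • d) - y⟫ ≤ 0 := by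
  have := real_inner_sub_nearest_le_zero hK hPmem hPproj (θ - τ • d) hy
  have hx : θ - τ • d - P (θ - τ • d) = -(τ • d + (P (θ - τ • d) - θ)) := by abel
  rwa [hx, ← neg_sub (P (θ - τ • d)) y, inner_neg_neg] at this

theorem two_mul_real_inner_projected_step_le (hK : Convex ℝ K) (hPmem : ∀ x, P x ∈ K)
    (hPproj : ∀ x, ∀ y ∈ K, ‖x - P x‖ ≤ ‖x - y‖) {θ : E} (hθ : θ ∈ K) (g G : E) {τ : ℝ}
    (hτ : 0 ≤ τ) :
    2 * τ * ⟪g, P (θ - τ • G) - θ⟫ ≤ 2 * τ ^ 2 * ‖g - G‖ ^ 2 - ‖P (θ - τ • g) - θ‖ ^ 2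
      - ‖P (θ - τ • G) - θ‖ ^ 2 - ‖(P (θ - τ • G) - θ) - (P (θ - τ • g) - θ)‖ ^ 2 := by
  set e := P (θ - τ • G) - θ
  set ē := P (θ - τ • g) - θ
  have hdiff : e - ē = P (θ - τ • G) - P (θ - τ • g) := sub_sub_sub_cancel_right _ _ _
  have hbar : τ * ⟪g, ē⟫ + ‖ē‖ ^ 2 ≤ 0 := by
    have := real_inner_smul_add_step_le_zero hK hPmem hPproj θ g τ hθ
    rwa [inner_add_left, real_inner_smul_left, real_inner_self_eq_norm_sq] at this
  have hplus : τ * ⟪G, e - ē⟫ + ⟪e, e - ē⟫ ≤ 0 := by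
    have := real_inner_smul_add_step_le_zero hK hPmem hPproj θ G τ (hPmem (θ - τ • g))
    rw [hdiff]
    rwa [inner_add_left, real_inner_smul_left] at this
  have hnonexp : ‖e - ē‖ ≤ τ * ‖g - G‖ :=
    calc ‖e - ē‖ = ‖P (θ - τ • G) - P (θ - τ • g)‖ := by rw [hdiff]
      _ ≤ ‖(θ - τ • G) - (θ - τ • g)‖ := norm_nearest_sub_nearest_le hK hPmem hPproj _ _
      _ = τ * ‖g - G‖ := by
          rw [sub_sub_sub_cancel_left, ← smul_sub, norm_smul, Real.norm_of_nonneg hτ]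
  have hcross : ⟪g - G, e - ē⟫ ≤ τ * ‖g - G‖ ^ 2 :=
    calc ⟪g - G, e - ē⟫ ≤ ‖g - G‖ * ‖e - ē‖ := real_inner_le_norm _ _
      _ ≤ ‖g - G‖ * (τ * ‖g - G‖) := by gcongr
      _ = τ * ‖g - G‖ ^ 2 := by ring
  have hsplit : ⟪g, e⟫ = ⟪g, ē⟫ + ⟪G, e - ē⟫ + ⟪g - G, e - ē⟫ := by
    simp only [inner_sub_left, inner_sub_right]; ring
  have hpolar : 2 * ⟪e, e - ē⟫ = ‖e‖ ^ 2 + ‖e - ē‖ ^ 2 - ‖ē‖ ^ 2 := by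
    rw [norm_sub_sq_real e ē, inner_sub_right, real_inner_self_eq_norm_sq]; ring
  linear_combination (2 * τ) * hsplit + 2 * hbar + 2 * hplus + (2 * τ) * hcross - hpolar

end NearestPoint

theorem stmt6_general {m : ℕ} (Θ : Set (EuclideanSpace ℝ (Fin m)))
    (hconv : Convex ℝ Θ)
    (P : EuclideanSpace ℝ (Fin m) → EuclideanSpace ℝ (Fin m))
    (hPmem : ∀ x, P x ∈ Θ)
    (hPproj : ∀ x, ∀ y ∈ Θ, ‖x - P x‖ ≤ ‖x - y‖)
    (L : EuclideanSpace ℝ (Fin m) → ℝ) (hL : Differentiable ℝ L)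
    (M : ℝ) (hM : 0 < M)
    (hLip : ∀ x y, ‖gradient L x - gradient L y‖ ≤ M * ‖x - y‖)
    (θ g G : EuclideanSpace ℝ (Fin m)) (hθ : θ ∈ Θ) (hg : g = gradient L θ)
    (τ : ℝ) (hτ : 0 < τ) :
    L (P (θ - τ • G)) - L θ ≤
      τ * ‖g - G‖ ^ 2 - (1 / (2 * τ) - M) * ‖P (θ - τ • g) - θ‖ ^ 2
        - (1 / (2 * τ) - M / 2) * ‖P (θ - τ • G) - θ‖ ^ 2
        - ‖(P (θ - τ • G) - θ) - (P (θ - τ • g) - θ)‖ ^ 2 / (2 * τ) := by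
  have hdescent := le_add_inner_gradient_add_of_lipschitz_gradient hL hLip θ (P (θ - τ • G))
  rw [← hg] at hdescent
  have hstep := two_mul_real_inner_projected_step_le hconv hPmem hPproj hθ g G hτ.le
  have hslack : 0 ≤ 2 * τ * M * ‖P (θ - τ • g) - θ‖ ^ 2 := by positivity
  rw [← mul_le_mul_iff_right₀ (by positivity : (0 : ℝ) < 2 * τ)]
  field_simp
  linear_combination (2 * τ) * hdescent + hstep + hslack

theorem stmt6 {m : ℕ} (Θ : Set (EuclideanSpace ℝ (Fin m)))
    (hne : Θ.Nonempty) (hclosed : IsClosed Θ) (hconv : Convex ℝ Θ)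
    (P : EuclideanSpace ℝ (Fin m) → EuclideanSpace ℝ (Fin m))
    (hPmem : ∀ x, P x ∈ Θ)
    (hPproj : ∀ x, ∀ y ∈ Θ, ‖x - P x‖ ≤ ‖x - y‖)
    (L : EuclideanSpace ℝ (Fin m) → ℝ) (hL : Differentiable ℝ L)
    (M : ℝ) (hM : 0 < M)
    (hLip : ∀ x y, ‖gradient L x - gradient L y‖ ≤ M * ‖x - y‖)
    (θ g G : EuclideanSpace ℝ (Fin m)) (hθ : θ ∈ Θ) (hg : g = gradient L θ)
    (τ : ℝ) (hτ : 0 < τ) :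
    L (P (θ - τ • G)) - L θ ≤
      τ * ‖g - G‖ ^ 2 - (1 / (2 * τ) - M) * ‖P (θ - τ • g) - θ‖ ^ 2
        - (1 / (2 * τ) - M / 2) * ‖P (θ - τ • G) - θ‖ ^ 2
        - ‖(P (θ - τ • G) - θ) - (P (θ - τ • g) - θ)‖ ^ 2 / (2 * τ) :=
  stmt6_general Θ hconv P hPmem hPproj L hL M hM hLip θ g G hθ hg τ hτ
end

section
/- Under the assumptions of the one-step projected SGD inequality, with τ = 1/(4M) and stochastic gradients G_j satisfying E[G_j | θ_j] = ∇L(θ_j) and E[|G_j − ∇L(θ_j)|²] ≤ σ², the gradient mapping 𝒢(θ_j) := (θ_j − Π(θ_j − τ∇L(θ_j)))/τ satisfies (1/J)·Σ_{j=1}^J E[|𝒢(θ_j)|²] ≤ 16M(E[L(θ_1)] − L*)/J + 4σ², where L* = min_{θ∈Θ} L(θ). -/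
set_option maxHeartbeats 1000000

open MeasureTheory RealInnerProductSpace

lemma descent_lemma {m : ℕ} (L : EuclideanSpace ℝ (Fin m) → ℝ) (hL : Differentiable ℝ L)
    (M : ℝ) (hM : 0 < M)
    (hLip : ∀ x y, ‖gradient L x - gradient L y‖ ≤ M * ‖x - y‖)
    (x y : EuclideanSpace ℝ (Fin m)) :
    L y ≤ L x + ⟪gradient L x, y - x⟫ + M / 2 * ‖y - x‖ ^ 2 := by
  set v := y - x with hv
  have hgcont : Continuous (gradient L) := by
    have : LipschitzWith M.toNNReal (gradient L) := by
      apply LipschitzWith.of_dist_le_mul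
      intro a b
      rw [dist_eq_norm, dist_eq_norm]
      calc ‖gradient L a - gradient L b‖ ≤ M * ‖a - b‖ := hLip a b
        _ = (M.toNNReal : ℝ) * ‖a - b‖ := by rw [Real.coe_toNNReal M hM.le]
    exact this.continuous
  have hkey : ∀ t : ℝ, HasDerivAt (fun s : ℝ => L (x + s • v))
      ⟪gradient L (x + t • v), v⟫ t := by
    intro t
    have h1 : HasDerivAt (fun s : ℝ => x + s • v) v t := by
      simpa using ((hasDerivAt_id t).smul_const v).const_add x
    have h3 := (hL (x + t • v)).hasFDerivAt.comp_hasDerivAt t h1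
    have h4 : ⟪gradient L (x + t • v), v⟫ = fderiv ℝ L (x + t • v) v := by
      simp [gradient, InnerProductSpace.toDual_symm_apply]
    rw [h4]
    exact h3
  have hcont : Continuous fun t : ℝ => ⟪gradient L (x + t • v), v⟫ := by
    apply Continuous.inner
    · exact hgcont.comp (continuous_const.add (continuous_id.smul continuous_const))
    · exact continuous_const
  have ftc : ∫ t in (0:ℝ)..1, ⟪gradient L (x + t • v), v⟫
      = L (x + (1:ℝ) • v) - L (x + (0:ℝ) • v) :=
    intervalIntegral.integral_eq_sub_of_hasDerivAt (fun t _ => hkey t)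
      (hcont.intervalIntegrable 0 1)
  have hxy : x + (1:ℝ) • v = y := by rw [hv]; simp
  have hx0 : x + (0:ℝ) • v = x := by simp
  rw [hxy, hx0] at ftc
  have hbound : ∀ t ∈ Set.Icc (0:ℝ) 1,
      ⟪gradient L (x + t • v), v⟫ ≤ ⟪gradient L x, v⟫ + (M * ‖v‖ ^ 2) * t := by
    intro t ht
    have h1 : ⟪gradient L (x + t • v) - gradient L x, v⟫
        ≤ ‖gradient L (x + t • v) - gradient L x‖ * ‖v‖ := real_inner_le_norm _ _
    have h2 : ‖gradient L (x + t • v) - gradient L x‖ ≤ M * (t * ‖v‖) := by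
      have := hLip (x + t • v) x
      simpa [norm_smul, abs_of_nonneg ht.1] using this
    have h3 : ‖gradient L (x + t • v) - gradient L x‖ * ‖v‖ ≤ M * (t * ‖v‖) * ‖v‖ :=
      mul_le_mul_of_nonneg_right h2 (norm_nonneg v)
    have h4 : ⟪gradient L (x + t • v), v⟫ - ⟪gradient L x, v⟫
        = ⟪gradient L (x + t • v) - gradient L x, v⟫ := by
      rw [inner_sub_left]
    nlinarith [sq_nonneg ‖v‖, sq_abs ‖v‖]
  have hcont2 : Continuous fun t : ℝ => ⟪gradient L x, v⟫ + (M * ‖v‖ ^ 2) * t :=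
    continuous_const.add (continuous_const.mul continuous_id)
  have hii1 : IntervalIntegrable (fun t : ℝ => ⟪gradient L (x + t • v), v⟫)
      MeasureTheory.volume 0 1 := hcont.intervalIntegrable 0 1
  have hii2 : IntervalIntegrable (fun t : ℝ => ⟪gradient L x, v⟫ + (M * ‖v‖ ^ 2) * t)
      MeasureTheory.volume 0 1 := hcont2.intervalIntegrable 0 1
  have hle := intervalIntegral.integral_mono_on (by norm_num : (0:ℝ) ≤ 1)
    hii1 hii2 hbound
  have hval : ∫ t in (0:ℝ)..1, (⟪gradient L x, v⟫ + (M * ‖v‖ ^ 2) * t)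
      = ⟪gradient L x, v⟫ + M / 2 * ‖v‖ ^ 2 := by
    have hic : IntervalIntegrable (fun _ : ℝ => ⟪gradient L x, v⟫)
        MeasureTheory.volume 0 1 := intervalIntegrable_const
    have hit : IntervalIntegrable (fun t : ℝ => (M * ‖v‖ ^ 2) * t)
        MeasureTheory.volume 0 1 :=
      (continuous_const.mul continuous_id').intervalIntegrable 0 1
    rw [intervalIntegral.integral_add hic hit, intervalIntegral.integral_const_mul,
      integral_id, intervalIntegral.integral_const]
    simp
    ring
  rw [ftc, hval] at hle
  linarith

lemma proj_vi {m : ℕ} {Θ : Set (EuclideanSpace ℝ (Fin m))} (hne : Θ.Nonempty) (hconv : Convex ℝ Θ)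
    (P : EuclideanSpace ℝ (Fin m) → EuclideanSpace ℝ (Fin m)) (hPmem : ∀ x, P x ∈ Θ)
    (hPproj : ∀ x, ∀ y ∈ Θ, ‖x - P x‖ ≤ ‖x - y‖) :
    ∀ x, ∀ y ∈ Θ, ⟪x - P x, y - P x⟫ ≤ 0 := by
  intro x y hy
  haveI : Nonempty Θ := hne.to_subtype
  have hbdd : BddBelow (Set.range fun w : Θ => ‖x - (w : EuclideanSpace ℝ (Fin m))‖) := by
    refine ⟨0, ?_⟩
    rintro r ⟨w, rfl⟩
    exact norm_nonneg _
  have hinf : ‖x - P x‖ = ⨅ w : Θ, ‖x - w‖ := by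
    apply le_antisymm
    · exact le_ciInf fun w => hPproj x w w.2
    · exact ciInf_le hbdd ⟨P x, hPmem x⟩
  exact (norm_eq_iInf_iff_real_inner_le_zero hconv (hPmem x)).mp hinf y hy

lemma key_step {m : ℕ} {Θ : Set (EuclideanSpace ℝ (Fin m))} (hne : Θ.Nonempty)
    (hconv : Convex ℝ Θ)
    (P : EuclideanSpace ℝ (Fin m) → EuclideanSpace ℝ (Fin m)) (hPmem : ∀ x, P x ∈ Θ)
    (hPproj : ∀ x, ∀ y ∈ Θ, ‖x - P x‖ ≤ ‖x - y‖)
    (L : EuclideanSpace ℝ (Fin m) → ℝ) (hL : Differentiable ℝ L) (M : ℝ) (hM : 0 < M)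
    (hLip : ∀ x y, ‖gradient L x - gradient L y‖ ≤ M * ‖x - y‖)
    (τ : ℝ) (hτ : τ = 1 / (4 * M))
    (θ0 : EuclideanSpace ℝ (Fin m)) (hθ0 : θ0 ∈ Θ) (G : EuclideanSpace ℝ (Fin m)) :
    ‖τ⁻¹ • (θ0 - P (θ0 - τ • gradient L θ0))‖ ^ 2
      ≤ 16 * M * (L θ0 - L (P (θ0 - τ • G))) + 4 * ‖G - gradient L θ0‖ ^ 2 := by
  have h4M : (0:ℝ) < 4 * M := by linarith
  set g := gradient L θ0 with hg
  set p := P (θ0 - τ • g) with hp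
  set p' := P (θ0 - τ • G) with hp'
  set A := ‖θ0 - p‖ with hA
  set B := ‖p - p'‖ with hB
  set N := ‖G - g‖ with hN
  set c1 : ℝ := ⟪g, θ0 - p⟫ with hc1
  set c2 : ℝ := ⟪g, p - p'⟫ with hc2
  set c3 : ℝ := ⟪G - g, p - p'⟫ with hc3
  set c4 : ℝ := ⟪θ0 - p, p - p'⟫ with hc4
  have hvi := proj_vi hne hconv P hPmem hPproj
  -- F2 : variational inequality at x = θ0 - τ•g, y = θ0
  have F2 : A ^ 2 ≤ τ * c1 := by
    have h := hvi (θ0 - τ • g) θ0 hθ0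
    have hexp : (θ0 - τ • g) - p = (θ0 - p) - τ • g := by rw [hp]; abel
    rw [hexp, inner_sub_left, real_inner_smul_left] at h
    have hsq : ⟪θ0 - p, θ0 - p⟫ = A ^ 2 := real_inner_self_eq_norm_sq _
    rw [hsq] at h
    rw [hc1, real_inner_comm] at *
    linarith
  -- F3 : variational inequality at x = θ0 - τ•G, y = p
  have F3 : c4 + B ^ 2 ≤ τ * (c2 + c3) := by
    have h := hvi (θ0 - τ • G) p (hPmem _)
    have hexp : (θ0 - τ • G) - p' = ((θ0 - p) + (p - p')) - τ • G := by rw [hp']; abel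
    have hexp2 : p - p' = p - p' := rfl
    rw [hexp] at h
    rw [show ((θ0 - p) + (p - p')) - τ • G = ((θ0 - p) + (p - p')) - τ • G from rfl] at h
    rw [inner_sub_left, inner_add_left, real_inner_smul_left] at h
    have hGsplit : ⟪G, p - p'⟫ = c2 + c3 := by
      rw [hc2, hc3, ← inner_add_left]
      congr 1
      abel
    have hBB : ⟪p - p', p - p'⟫ = B ^ 2 := real_inner_self_eq_norm_sq _
    rw [hBB, hGsplit] at h
    rw [hc4] at *
    linarith
  -- F1 : descent lemma at y = p'
  have F1 : L p' ≤ L θ0 - (c1 + c2) + M / 2 * (A ^ 2 + 2 * c4 + B ^ 2) := by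
    have h := descent_lemma L hL M hM hLip θ0 p'
    have hsplit : ⟪g, p' - θ0⟫ = -(c1 + c2) := by
      rw [hc1, hc2, ← inner_add_right, ← inner_neg_right]
      congr 1
      abel
    have hnorm : ‖p' - θ0‖ ^ 2 = A ^ 2 + 2 * c4 + B ^ 2 := by
      have h1 : p' - θ0 = -((θ0 - p) + (p - p')) := by abel
      rw [h1, norm_neg, ← real_inner_self_eq_norm_sq, real_inner_add_add_self,
        real_inner_self_eq_norm_sq, real_inner_self_eq_norm_sq]
    rw [← hg, hsplit, hnorm] at h
    linarith
  -- Cauchy-Schwarz facts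
  have F4 : c3 ≤ N * B :=
    le_trans (real_inner_le_norm _ _) (by rw [hN, hB])
  have F5 : -(A * B) ≤ c4 := by
    have h := real_inner_le_norm (θ0 - p) (p' - p)
    have h1 : ⟪θ0 - p, p' - p⟫ = -c4 := by
      rw [hc4, ← inner_neg_right]
      congr 1
      abel
    have h2 : ‖p' - p‖ = B := by rw [hB, ← norm_neg]; congr 1; abel
    rw [h1, h2] at h
    rw [hc4] at *
    linarith
  have hAnn : 0 ≤ A := norm_nonneg _
  have hBnn : 0 ≤ B := norm_nonneg _
  have hNnn : 0 ≤ N := norm_nonneg _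
  have hτM : τ * (4 * M) = 1 := by rw [hτ]; field_simp
  have e2 : 4 * M * A ^ 2 ≤ c1 := by
    have h' : τ * c1 = c1 / (4 * M) := by rw [hτ]; ring
    rw [h'] at F2
    have h'' := (le_div_iff₀ h4M).mp F2
    linarith
  have e3 : 4 * M * (c4 + B ^ 2) ≤ c2 + c3 := by
    have h' : τ * (c2 + c3) = (c2 + c3) / (4 * M) := by rw [hτ]; ring
    rw [h'] at F3
    have h'' := (le_div_iff₀ h4M).mp F3
    linarith
  have hτinv : τ⁻¹ = 4 * M := by rw [hτ]; simp
  have hnorm𝒢 : ‖τ⁻¹ • (θ0 - p)‖ ^ 2 = 16 * M ^ 2 * A ^ 2 := by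
    rw [norm_smul, hτinv, Real.norm_eq_abs, abs_of_pos h4M, ← hA]
    ring
  rw [hnorm𝒢]
  nlinarith [e2, e3, F1, F4, F5, sq_nonneg (N - 2 * M * B),
    mul_nonneg (mul_nonneg hM.le hM.le) (sq_nonneg (A - B)),
    mul_nonneg (mul_nonneg hM.le hM.le) (sq_nonneg A),
    mul_pos hM hM, mul_nonneg hM.le (mul_nonneg hNnn hBnn)]

theorem stmt7 {m : ℕ} (Θ : Set (EuclideanSpace ℝ (Fin m)))
    (hne : Θ.Nonempty) (hclosed : IsClosed Θ) (hconv : Convex ℝ Θ)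
    (P : EuclideanSpace ℝ (Fin m) → EuclideanSpace ℝ (Fin m))
    (hPmem : ∀ x, P x ∈ Θ)
    (hPproj : ∀ x, ∀ y ∈ Θ, ‖x - P x‖ ≤ ‖x - y‖)
    (L : EuclideanSpace ℝ (Fin m) → ℝ) (hL : Differentiable ℝ L)
    (M : ℝ) (hM : 0 < M)
    (hLip : ∀ x y, ‖gradient L x - gradient L y‖ ≤ M * ‖x - y‖)
    (Lstar : ℝ) (hLstar : IsLeast (L '' Θ) Lstar)
    (τ : ℝ) (hτ : τ = 1 / (4 * M))
    {W : Type*} [MeasureSpace W] (μ : Measure W) [IsProbabilityMeasure μ]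
    (θ G : ℕ → W → EuclideanSpace ℝ (Fin m))
    (hθmeas : ∀ j, Measurable (θ j)) (hGmeas : ∀ j, Measurable (G j))
    (hθmem : ∀ j ω, θ j ω ∈ Θ)
    (hupdate : ∀ j ω, θ (j + 1) ω = P (θ j ω - τ • G j ω))
    (hunbiased : ∀ j,
      μ[G j | MeasurableSpace.comap (θ j) inferInstance]
        =ᵐ[μ] fun ω => gradient L (θ j ω))
    (σ2 : ℝ)
    (hvar : ∀ j, ∫ ω, ‖G j ω - gradient L (θ j ω)‖ ^ 2 ∂μ ≤ σ2)
    (hLint : ∀ j, Integrable (fun ω => L (θ j ω)) μ)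
    (hGint : ∀ j, Integrable (fun ω => ‖G j ω - gradient L (θ j ω)‖ ^ 2) μ)
    (hgmapint : ∀ j, Integrable
      (fun ω => ‖τ⁻¹ • (θ j ω - P (θ j ω - τ • gradient L (θ j ω)))‖ ^ 2) μ)
    (J : ℕ) (hJ : 0 < J) :
    (1 / (J : ℝ)) * ∑ j ∈ Finset.Icc 1 J,
        ∫ ω, ‖τ⁻¹ • (θ j ω - P (θ j ω - τ • gradient L (θ j ω)))‖ ^ 2 ∂μ
      ≤ 16 * M * ((∫ ω, L (θ 1 ω) ∂μ) - Lstar) / J + 4 * σ2 := by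
  set I : ℕ → ℝ := fun j => ∫ ω, L (θ j ω) ∂μ with hI
  have step : ∀ j : ℕ,
      (∫ ω, ‖τ⁻¹ • (θ j ω - P (θ j ω - τ • gradient L (θ j ω)))‖ ^ 2 ∂μ)
        ≤ 16 * M * (I j - I (j + 1)) + 4 * σ2 := by
    intro j
    have hpt : ∀ ω, ‖τ⁻¹ • (θ j ω - P (θ j ω - τ • gradient L (θ j ω)))‖ ^ 2
        ≤ 16 * M * (L (θ j ω) - L (θ (j + 1) ω))
          + 4 * ‖G j ω - gradient L (θ j ω)‖ ^ 2 := by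
      intro ω
      have h := key_step hne hconv P hPmem hPproj L hL M hM hLip τ hτ
        (θ j ω) (hθmem j ω) (G j ω)
      rw [hupdate j ω]
      exact h
    have hsub : Integrable (fun ω => L (θ j ω) - L (θ (j + 1) ω)) μ :=
      (hLint j).sub (hLint (j + 1))
    have hint1 : Integrable (fun ω => 16 * M * (L (θ j ω) - L (θ (j + 1) ω))) μ :=
      hsub.const_mul (16 * M)
    have hint2 : Integrable (fun ω => 4 * ‖G j ω - gradient L (θ j ω)‖ ^ 2) μ :=
      (hGint j).const_mul 4
    calc (∫ ω, ‖τ⁻¹ • (θ j ω - P (θ j ω - τ • gradient L (θ j ω)))‖ ^ 2 ∂μ)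
        ≤ ∫ ω, (16 * M * (L (θ j ω) - L (θ (j + 1) ω))
            + 4 * ‖G j ω - gradient L (θ j ω)‖ ^ 2) ∂μ :=
          integral_mono (hgmapint j) (hint1.add hint2) hpt
      _ = 16 * M * (I j - I (j + 1))
            + 4 * ∫ ω, ‖G j ω - gradient L (θ j ω)‖ ^ 2 ∂μ := by
          rw [integral_add hint1 hint2, integral_const_mul, integral_const_mul,
            integral_sub (hLint j) (hLint (j + 1))]
      _ ≤ 16 * M * (I j - I (j + 1)) + 4 * σ2 := by
          have := hvar j
          linarith
  have sumbound : ∀ K : ℕ,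
      (∑ j ∈ Finset.Icc 1 K,
        ∫ ω, ‖τ⁻¹ • (θ j ω - P (θ j ω - τ • gradient L (θ j ω)))‖ ^ 2 ∂μ)
        ≤ 16 * M * (I 1 - I (K + 1)) + 4 * K * σ2 := by
    intro K
    induction K with
    | zero => simp
    | succ K ih =>
        rw [← Finset.insert_Icc_right_eq_Icc_add_one (by omega : 1 ≤ K + 1),
          Finset.sum_insert (by simp)]
        have := step (K + 1)
        push_cast
        push_cast at ih
        linarith
  have hIJ1 : Lstar ≤ I (J + 1) := by
    have hpt : ∀ ω, Lstar ≤ L (θ (J + 1) ω) := fun ω =>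
      hLstar.2 ⟨θ (J + 1) ω, hθmem _ ω, rfl⟩
    have h := integral_mono (integrable_const Lstar) (hLint (J + 1)) hpt
    simpa using h
  have hJpos : (0:ℝ) < (J:ℝ) := by exact_mod_cast hJ
  have hS := sumbound J
  have hS2 : (∑ j ∈ Finset.Icc 1 J,
      ∫ ω, ‖τ⁻¹ • (θ j ω - P (θ j ω - τ • gradient L (θ j ω)))‖ ^ 2 ∂μ)
      ≤ 16 * M * (I 1 - Lstar) + 4 * J * σ2 := by nlinarith [hS, hIJ1, mul_nonneg hM.le (sub_nonneg.mpr hIJ1)]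
  have heq : (1 / (J:ℝ)) * (16 * M * (I 1 - Lstar) + 4 * (J:ℝ) * σ2)
      = 16 * M * (I 1 - Lstar) / (J:ℝ) + 4 * σ2 := by
    field_simp
  calc (1 / (J : ℝ)) * ∑ j ∈ Finset.Icc 1 J,
        ∫ ω, ‖τ⁻¹ • (θ j ω - P (θ j ω - τ • gradient L (θ j ω)))‖ ^ 2 ∂μ
      ≤ (1 / (J:ℝ)) * (16 * M * (I 1 - Lstar) + 4 * (J:ℝ) * σ2) :=
        mul_le_mul_of_nonneg_left hS2 (by positivity)
    _ = 16 * M * (I 1 - Lstar) / (J:ℝ) + 4 * σ2 := heq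
end
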